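/- Let W be the principal Lambert W function and define λ₁(r) = r^{-2}·[W(e^{g(r)}) − g(r)]² for r > 0, where g(r) = e^{-r/√2}(sin(r/√2) + cos(r/√2)). Then as r → ∞, λ₁(r) = W(1)²/r² + O(e^{-r/√2}), i.e., there exist constants C, R > 0 such that |λ₁(r) − W(1)²/r²| ≤ C·e^{-r/√2} for all r ≥ R. -/
import Mathlib


open Real

noncomputable def g1 (r : ℝ) : ℝ :=
  Real.exp (-(r / Real.sqrt 2)) * (Real.sin (r / Real.sqrt 2) + Real.cos (r / Real.sqrt 2))

/-- With `λ₁(r) = r^{-2}[W(e^{g(r)}) − g(r)]²`, one has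
`λ₁(r) = W(1)²/r² + O(e^{-r/√2})` as `r → ∞`.
`W` is the principal Lambert function, characterized on `(0,∞)` by
`W(x) > 0` and `W(x)e^{W(x)} = x`. -/
theorem lambda1_asymptotics_infinity
    (W : ℝ → ℝ) (hW : ∀ x : ℝ, 0 < x → 0 < W x ∧ W x * Real.exp (W x) = x) :
    ∃ C > (0:ℝ), ∃ R > (0:ℝ), ∀ r : ℝ, R ≤ r →
      |(W (Real.exp (g1 r)) - g1 r) ^ 2 / r ^ 2 - (W 1) ^ 2 / r ^ 2|
        ≤ C * Real.exp (-(r / Real.sqrt 2)) := by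
  obtain ⟨hw0, hw1⟩ := hW 1 one_pos
  set w := W 1 with hwdef
  have hwlt1 : w < 1 := by
    nlinarith [Real.add_one_le_exp w, hw0]
  refine ⟨24, by norm_num, 1, one_pos, fun r hr => ?_⟩
  have hrpos : (0:ℝ) < r := lt_of_lt_of_le one_pos hr
  set E := Real.exp (-(r / Real.sqrt 2)) with hE
  have hEpos : 0 < E := Real.exp_pos _
  have hE1 : E ≤ 1 := by
    rw [hE, Real.exp_le_one_iff]
    have h2 : (0:ℝ) < Real.sqrt 2 := by positivity
    have : 0 < r / Real.sqrt 2 := div_pos hrpos h2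
    linarith
  have hg : |g1 r| ≤ 2 * E := by
    rw [g1, abs_mul, abs_of_pos hEpos]
    have h1 : |Real.sin (r / Real.sqrt 2) + Real.cos (r / Real.sqrt 2)| ≤ 2 := by
      calc |Real.sin (r / Real.sqrt 2) + Real.cos (r / Real.sqrt 2)|
          ≤ |Real.sin (r / Real.sqrt 2)| + |Real.cos (r / Real.sqrt 2)| := abs_add_le _ _
        _ ≤ 1 + 1 := add_le_add (Real.abs_sin_le_one _) (Real.abs_cos_le_one _)
        _ = 2 := by norm_num
    calc E * |Real.sin (r / Real.sqrt 2) + Real.cos (r / Real.sqrt 2)| ≤ E * 2 :=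
          mul_le_mul_of_nonneg_left h1 hEpos.le
      _ = 2 * E := by ring
  obtain ⟨hu0, hueq⟩ := hW (Real.exp (g1 r)) (Real.exp_pos _)
  set u := W (Real.exp (g1 r)) with hudef
  have hlogu : Real.log u + u = g1 r := by
    have h := congrArg Real.log hueq
    rwa [Real.log_mul (ne_of_gt hu0) (Real.exp_ne_zero _), Real.log_exp, Real.log_exp] at h
  have hlogw : Real.log w + w = 0 := by
    have h := congrArg Real.log hw1
    rwa [Real.log_mul (ne_of_gt hw0) (Real.exp_ne_zero _), Real.log_exp, Real.log_one] at h
  have key : |u - w| ≤ |g1 r| := by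
    rcases le_total w u with h | h
    · have hlog : Real.log w ≤ Real.log u := Real.log_le_log hw0 h
      rw [abs_of_nonneg (sub_nonneg.2 h)]
      have : u - w ≤ g1 r := by linarith
      exact this.trans (le_abs_self _)
    · have hlog : Real.log u ≤ Real.log w := Real.log_le_log hu0 h
      rw [abs_of_nonpos (sub_nonpos.2 h)]
      have : g1 r ≤ u - w := by linarith
      calc -(u - w) ≤ -(g1 r) := by linarith
        _ ≤ |g1 r| := neg_le_abs _
  have ka : |u - w| ≤ 2 * E := key.trans hg
  obtain ⟨ka1, ka2⟩ := abs_le.1 ka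
  obtain ⟨kb1, kb2⟩ := abs_le.1 hg
  have hr2 : (1:ℝ) ≤ r ^ 2 := by nlinarith
  have main : |(u - g1 r) ^ 2 - w ^ 2| ≤ 24 * E := by
    rw [abs_le]
    constructor <;> nlinarith [hEpos, hE1, hw0, hwlt1, sq_nonneg E]
  calc |(u - g1 r) ^ 2 / r ^ 2 - w ^ 2 / r ^ 2|
      = |((u - g1 r) ^ 2 - w ^ 2)| / r ^ 2 := by
        rw [div_sub_div_same, abs_div, abs_of_pos (by positivity : (0:ℝ) < r ^ 2)]
    _ ≤ |((u - g1 r) ^ 2 - w ^ 2)| := div_le_self (abs_nonneg _) hr2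
    _ ≤ 24 * E := main
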